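/- arXiv:1808.08734 — 2 statements merged into one kernel-verified Lean document; each statement's English description precedes it below -/
import Mathlib

section
/- For any finite index set I, random variables S_i and C_i for i in I, and any p ≥ 1, the expectation of max_{i∈I} S_i is at most the expectation of max_{i∈I} C_i plus (∑_{i∈I} E|S_i − C_i|^p)^{1/p}. -/
open MeasureTheory

/-- Aven's lemma: `E max S ≤ E max C + (∑ E|S_i − C_i|^p)^{1/p}`. -/
theorem stmt_0 {Ω : Type*} [MeasurableSpace Ω] (μ : Measure Ω) [IsProbabilityMeasure μ]
    {I : Type*} [Fintype I] [Nonempty I] (S C : I → Ω → ℝ) (p : ℝ) (hp : 1 ≤ p)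
    (hS : Integrable (fun ω => ⨆ i, S i ω) μ)
    (hC : Integrable (fun ω => ⨆ i, C i ω) μ)
    (hSC : ∀ i, Integrable (fun ω => |S i ω - C i ω| ^ p) μ) :
    ∫ ω, (⨆ i, S i ω) ∂μ ≤
      ∫ ω, (⨆ i, C i ω) ∂μ + (∑ i, ∫ ω, |S i ω - C i ω| ^ p ∂μ) ^ (1 / p) := by
  have hp0 : (0:ℝ) < p := lt_of_lt_of_le one_pos hp
  set f : Ω → ℝ := fun ω => ∑ i, |S i ω - C i ω| ^ p with hfdef
  have hf0 : ∀ ω, 0 ≤ f ω := fun ω =>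
    Finset.sum_nonneg fun i _ => Real.rpow_nonneg (abs_nonneg _) _
  have hf : Integrable f μ := integrable_finset_sum _ fun i _ => hSC i
  -- integrability of f ^ (1/p)
  have hgf : Integrable (fun ω => f ω ^ (1/p)) μ := by
    have hmeas : AEStronglyMeasurable (fun ω => f ω ^ (1/p)) μ :=
      (Real.continuous_rpow_const (by positivity)).comp_aestronglyMeasurable
        hf.aestronglyMeasurable
    refine ((integrable_const (1:ℝ)).add hf).mono hmeas (ae_of_all _ fun ω => ?_)
    have h1 : f ω ^ (1/p) ≤ 1 + f ω := by
      rcases le_total (f ω) 1 with h | h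
      · have := Real.rpow_le_one (hf0 ω) h (by positivity : (0:ℝ) ≤ 1/p)
        linarith [hf0 ω]
      · have h2 : f ω ^ (1/p) ≤ f ω ^ (1:ℝ) :=
          Real.rpow_le_rpow_of_exponent_le h (by
            rw [div_le_one hp0]; linarith)
        rw [Real.rpow_one] at h2; linarith
      -- done
    have hnn : 0 ≤ f ω ^ (1/p) := Real.rpow_nonneg (hf0 ω) _
    rw [Real.norm_eq_abs, abs_of_nonneg hnn, Real.norm_eq_abs]
    calc f ω ^ (1/p) ≤ 1 + f ω := h1
      _ ≤ |1 + f ω| := le_abs_self _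
  -- pointwise bound
  have hpt : ∀ ω, (⨆ i, S i ω) ≤ (⨆ i, C i ω) + f ω ^ (1/p) := by
    intro ω
    refine ciSup_le fun i => ?_
    have h1 : S i ω ≤ C i ω + |S i ω - C i ω| := by
      have := le_abs_self (S i ω - C i ω); linarith
    have h2 : C i ω ≤ ⨆ j, C j ω :=
      le_ciSup (f := fun j => C j ω) (Set.Finite.bddAbove (Set.finite_range _)) i
    have h3 : |S i ω - C i ω| ≤ f ω ^ (1/p) := by
      have hsingle : |S i ω - C i ω| ^ p ≤ f ω :=
        Finset.single_le_sum (f := fun j => |S j ω - C j ω| ^ p)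
          (fun j _ => Real.rpow_nonneg (abs_nonneg _) _) (Finset.mem_univ i)
      calc |S i ω - C i ω| = (|S i ω - C i ω| ^ p) ^ (1/p) := by
            rw [one_div, Real.rpow_rpow_inv (abs_nonneg _) hp0.ne']
        _ ≤ f ω ^ (1/p) :=
            Real.rpow_le_rpow (Real.rpow_nonneg (abs_nonneg _) _) hsingle (by positivity)
    linarith
  -- Jensen
  have hjensen : (∫ ω, f ω ^ (1/p) ∂μ) ≤ (∫ ω, f ω ∂μ) ^ (1/p) := by
    refine ConcaveOn.le_map_integral (s := Set.Ici 0)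
      (Real.concaveOn_rpow (by positivity) (by rw [div_le_one hp0]; linarith))
      ?_ isClosed_Ici (ae_of_all _ fun ω => hf0 ω) hf hgf
    exact fun x _ => (Real.continuousAt_rpow_const x (1/p) (Or.inr (by positivity))).continuousWithinAt
  calc ∫ ω, (⨆ i, S i ω) ∂μ ≤ ∫ ω, ((⨆ i, C i ω) + f ω ^ (1/p)) ∂μ :=
        integral_mono hS (hC.add hgf) hpt
    _ = ∫ ω, (⨆ i, C i ω) ∂μ + ∫ ω, f ω ^ (1/p) ∂μ := integral_add hC hgf
    _ ≤ ∫ ω, (⨆ i, C i ω) ∂μ + (∫ ω, f ω ∂μ) ^ (1/p) := by linarith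
    _ = ∫ ω, (⨆ i, C i ω) ∂μ + (∑ i, ∫ ω, |S i ω - C i ω| ^ p ∂μ) ^ (1/p) := by
        rw [hfdef, integral_finset_sum _ fun i _ => hSC i]
end

section
/- Let C ⊂ ℝ^d be a compact set with λ_d(C) > 0 and whose boundary has Lebesgue measure zero, let X_1,…,X_n be i.i.d. uniform in C, and let N_{γn} be the number of d-element subsets {X_{i_1},…,X_{i_d}} all of whose pairwise distances are at most (γn)^{−1/(d−1)}. Then lim_{n→∞} E N_{γn} = c(d) γ^{−d} λ_d(C)^{−(d−1)}, where c(d) = (d!)^{−1} ∫_{(B^d)^{d−1}} ∏_{1≤i<j≤d−1} 1(‖y_i − y_j‖ ≤ 1) dy_1⋯dy_{d−1} ≤ (d!)^{−1} κ_d^{d−1}, and moreover E N_{γn} ≤ c(d) γ^{−d} λ_d(C)^{−(d−1)} for all n. -/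
/-!
By linearity of expectation, `E N` is `C(n, d)` times the probability that `d` i.i.d. uniform
points of `C` are pairwise within distance `r`. Fixing the first point `x ∈ C` and writing the
others as `x + r • z`, this probability is
`λ(C)^{-d} r^{d(d-1)} ∫_C λ^{d-1} {z ∈ S : x + r • z_j ∈ C ∀ j} dx`, where `S` is the set of
`(z_1, …, z_{d-1})` with `(0, z_1, …, z_{d-1})` pairwise within distance `1`.
At the scale `r = (γn)^{-1/(d-1)}` the prefactor is `C(n, d) (γn)^{-d} ≤ γ^{-d} / d!`, with
equality in the limit. The integral is at most `λ^{d-1}(S) λ(C)`, and tends to it as `r → 0` by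
dominated convergence, since almost every point of `C` is interior (`∂C` is null).
-/

open MeasureTheory ProbabilityTheory Filter Set Topology
open scoped Classical ENNReal

def closeTuples (ι : Type*) {α : Type*} [PseudoMetricSpace α] (r : ℝ) : Set (ι → α) :=
  {v | ∀ i j, dist (v i) (v j) ≤ r}

lemma isClosed_closeTuples (ι : Type*) {α : Type*} [PseudoMetricSpace α] (r : ℝ) :
    IsClosed (closeTuples ι (α := α) r) := by
  simp only [closeTuples, ofPred_forall]
  exact isClosed_iInter fun i => isClosed_iInter fun j =>
    isClosed_le (by fun_prop) continuous_const

section Expectation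

variable {Ω ι α : Type*} [MeasurableSpace Ω] {P : Measure Ω} [MeasurableSpace α]
  {Y : ι → Ω → α} {ν : Measure α}

lemma ProbabilityTheory.iIndepFun.map_comp_injective_eq_pi {κ : Type*} [Fintype κ]
    (hY : ∀ i, Measurable (Y i)) (hind : iIndepFun Y P) (hlaw : ∀ i, P.map (Y i) = ν)
    {e : κ → ι} (he : e.Injective) :
    P.map (fun ω k => Y (e k) ω) = Measure.pi fun _ => ν := by
  rw [(hind.precomp he).map_fun_eq_pi_map fun k => (hY (e k)).aemeasurable]
  simp only [hlaw]

variable [PseudoMetricSpace α] [SecondCountableTopology α] [OpensMeasurableSpace α]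

lemma measure_forall_mem_dist_le_eq_pi (hY : ∀ i, Measurable (Y i)) (hind : iIndepFun Y P)
    (hlaw : ∀ i, P.map (Y i) = ν) {d : ℕ} {J : Finset ι} (hJ : J.card = d) (r : ℝ) :
    P {ω | ∀ i ∈ J, ∀ j ∈ J, dist (Y i ω) (Y j ω) ≤ r} =
      Measure.pi (fun _ : Fin d => ν) (closeTuples (Fin d) r) := by
  set σ := J.equivFinOfCardEq hJ
  have he : (fun k => (σ.symm k : ι)).Injective :=
    Subtype.val_injective.comp σ.symm.injective
  have hevent : {ω | ∀ i ∈ J, ∀ j ∈ J, dist (Y i ω) (Y j ω) ≤ r} =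
      (fun ω k => Y (σ.symm k) ω) ⁻¹' closeTuples (Fin d) r := by
    ext ω
    refine ⟨fun h k l => h _ (σ.symm k).2 _ (σ.symm l).2, fun h i hi j hj => ?_⟩
    simpa using h (σ ⟨i, hi⟩) (σ ⟨j, hj⟩)
  rw [hevent, ← hind.map_comp_injective_eq_pi hY hlaw he,
    Measure.map_apply (by fun_prop) (isClosed_closeTuples _ r).measurableSet]

/-- The decidability instance is an argument so that the lemma applies to whichever instance the
count was elaborated with (for `ι = Fin n` that is `Nat.decidableForallFin`). -/
theorem integral_card_filter_forall_mem_dist_le [IsProbabilityMeasure P] [Fintype ι] (d : ℕ)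
    (r : ℝ) [∀ ω, DecidablePred fun J : Finset ι => ∀ i ∈ J, ∀ j ∈ J, dist (Y i ω) (Y j ω) ≤ r]
    (hY : ∀ i, Measurable (Y i)) (hind : iIndepFun Y P) (hlaw : ∀ i, P.map (Y i) = ν) :
    ∫ ω, ((((Finset.univ : Finset ι).powersetCard d).filter fun J =>
        ∀ i ∈ J, ∀ j ∈ J, dist (Y i ω) (Y j ω) ≤ r).card : ℝ) ∂P =
      (Fintype.card ι).choose d *
        (Measure.pi (fun _ : Fin d => ν) (closeTuples (Fin d) r)).toReal := by
  have hmeas (J : Finset ι) :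
      MeasurableSet {ω | ∀ i ∈ J, ∀ j ∈ J, dist (Y i ω) (Y j ω) ≤ r} := by
    simp only [ofPred_forall]
    exact .iInter fun i => .iInter fun _ => .iInter fun j => .iInter fun _ =>
      measurableSet_le ((hY i).dist (hY j)) measurable_const
  have hcount (ω : Ω) : ((((Finset.univ : Finset ι).powersetCard d).filter fun J =>
        ∀ i ∈ J, ∀ j ∈ J, dist (Y i ω) (Y j ω) ≤ r).card : ℝ) =
      ∑ J ∈ (Finset.univ : Finset ι).powersetCard d,
        {ω | ∀ i ∈ J, ∀ j ∈ J, dist (Y i ω) (Y j ω) ≤ r}.indicator 1 ω := by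
    simp only [Finset.natCast_card_filter, Set.indicator_apply, Set.mem_ofPred_eq, Pi.one_apply]
  simp_rw [hcount]
  rw [integral_finsetSum _ fun J _ => (integrable_const 1).indicator (hmeas J) (f := 1),
    Finset.sum_congr rfl fun J hJ => by
      rw [integral_indicator_one (hmeas J), measureReal_def,
        measure_forall_mem_dist_le_eq_pi hY hind hlaw (Finset.mem_powersetCard.mp hJ).2],
    Finset.sum_const, Finset.card_powersetCard, Finset.card_univ, nsmul_eq_mul]

end Expectation

lemma ProbabilityTheory.pi_cond_apply {α ι : Type*} [MeasurableSpace α] [Fintype ι]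
    (μ : Measure α) [SigmaFinite μ] {C : Set α} (hC₀ : μ C ≠ 0) (hC : μ C ≠ ∞)
    {A : Set (ι → α)} (hA : MeasurableSet A) :
    Measure.pi (fun _ : ι => μ[|C]) A =
      (μ C)⁻¹ ^ Fintype.card ι * Measure.pi (fun _ => μ) (univ.pi (fun _ => C) ∩ A) := by
  have := cond_isProbabilityMeasure_of_finite hC₀ hC
  have hpi : Measure.pi (fun _ : ι => μ[|C]) =
      (μ C)⁻¹ ^ Fintype.card ι • (Measure.pi fun _ => μ).restrict (univ.pi fun _ => C) := by
    refine Measure.pi_eq fun s hs => ?_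
    simp only [Measure.restrict_pi_pi, Measure.smul_apply, Measure.pi_pi, smul_eq_mul, cond,
      Finset.prod_mul_distrib, Finset.prod_const, Finset.card_univ]
  rw [hpi, Measure.smul_apply, Measure.restrict_apply hA, smul_eq_mul, inter_comm]

lemma MeasureTheory.Measure.pi_fin_succ_apply {α : Type*} [MeasurableSpace α] (μ : Measure α)
    [SigmaFinite μ] {m : ℕ} {s : Set (Fin (m + 1) → α)} (hs : MeasurableSet s) :
    Measure.pi (fun _ => μ) s =
      ∫⁻ x, Measure.pi (fun _ : Fin m => μ) {w | Fin.cons x w ∈ s} ∂μ := by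
  have e := (measurePreserving_piFinSuccAbove (fun _ : Fin (m + 1) => μ) 0).symm
  rw [← e.measure_preimage hs.nullMeasurableSet, Measure.prod_apply (e.measurable hs)]
  congr! with x
  ext w
  simp [MeasurableEquiv.piFinSuccAbove, Fin.consEquiv]

section Binomial

lemma natCast_mul_inv_mul_natCast {n : ℕ} (hn : n ≠ 0) (γ : ℝ) : (n : ℝ) * (γ * n)⁻¹ = γ⁻¹ := by
  rw [mul_inv, mul_left_comm, mul_inv_cancel₀ (Nat.cast_ne_zero.mpr hn), mul_one]

lemma choose_mul_inv_mul_pow_le (k n : ℕ) {γ : ℝ} (hγ : 0 ≤ γ) :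
    (n.choose k : ℝ) * ((γ * n)⁻¹) ^ k ≤ γ⁻¹ ^ k / k.factorial := by
  have hnp : (n : ℝ) * (γ * n)⁻¹ ≤ γ⁻¹ := by
    rcases eq_or_ne n 0 with rfl | hn
    · simpa using hγ
    · exact (natCast_mul_inv_mul_natCast hn γ).le
  calc (n.choose k : ℝ) * ((γ * n)⁻¹) ^ k ≤ (n : ℝ) ^ k / k.factorial * ((γ * n)⁻¹) ^ k := by
        gcongr; exact Nat.choose_le_pow_div k n
    _ = ((n : ℝ) * (γ * n)⁻¹) ^ k / k.factorial := by ring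
    _ ≤ γ⁻¹ ^ k / k.factorial := by gcongr

lemma tendsto_choose_mul_inv_mul_pow (k : ℕ) (γ : ℝ) :
    Tendsto (fun n : ℕ => (n.choose k : ℝ) * ((γ * n)⁻¹) ^ k) atTop
      (𝓝 (γ⁻¹ ^ k / k.factorial)) :=
  tendsto_choose_mul_pow_atTop k <| tendsto_const_nhds.congr' <|
    (eventually_ne_atTop 0).mono fun _ hn => (natCast_mul_inv_mul_natCast hn γ).symm

end Binomial

lemma rpow_neg_one_div_natCast_pow {t : ℝ} (ht : 0 ≤ t) {m : ℕ} (hm : m ≠ 0) :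
    (t ^ (-(1 / (m : ℝ)))) ^ m = t⁻¹ := by
  rw [Real.rpow_neg ht, inv_pow, one_div, Real.rpow_inv_natCast_pow ht hm]

section ClusterShape

/-- `d! c(d)` in the notation of the statement is the volume of `clusterShape (Fin (d - 1)) ℝᵈ`. -/
def clusterShape (ι E : Type*) [SeminormedAddCommGroup E] : Set (ι → E) :=
  {z | (∀ i, ‖z i‖ ≤ 1) ∧ ∀ i j, ‖z i - z j‖ ≤ 1}

def clusterShapeIn (ι : Type*) {E : Type*} [SeminormedAddCommGroup E] [NormedSpace ℝ E]
    (C : Set E) (x : E) (r : ℝ) : Set (ι → E) :=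
  {z | z ∈ clusterShape ι E ∧ ∀ j, x + r • z j ∈ C}

variable {ι E : Type*}

section NormedGroup

variable [NormedAddCommGroup E]

lemma clusterShape_subset_pi_closedBall :
    clusterShape ι E ⊆ univ.pi fun _ => Metric.closedBall 0 1 :=
  fun _ hz i _ => mem_closedBall_zero_iff.mpr (hz.1 i)

lemma isClosed_clusterShape : IsClosed (clusterShape ι E) := by
  simp only [clusterShape, ofPred_and, ofPred_forall]
  exact (isClosed_iInter fun i => isClosed_le (by fun_prop) continuous_const).inter
    (isClosed_iInter fun i => isClosed_iInter fun j => isClosed_le (by fun_prop) continuous_const)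

variable [Fintype ι] [MeasurableSpace E] (μ : Measure E) [SigmaFinite μ]

lemma measure_pi_clusterShape_le :
    Measure.pi (fun _ : ι => μ) (clusterShape ι E) ≤
      μ (Metric.closedBall 0 1) ^ Fintype.card ι :=
  (measure_mono clusterShape_subset_pi_closedBall).trans_eq <| by
    rw [Measure.pi_pi, Finset.prod_const, Finset.card_univ]

lemma measure_pi_clusterShape_lt_top [ProperSpace E] [IsFiniteMeasureOnCompacts μ] :
    Measure.pi (fun _ : ι => μ) (clusterShape ι E) < ∞ :=
  (measure_pi_clusterShape_le μ).trans_lt (ENNReal.pow_lt_top measure_closedBall_lt_top)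

end NormedGroup

variable [NormedAddCommGroup E] [NormedSpace ℝ E]

lemma cons_mem_pi_inter_closeTuples_iff {m : ℕ} {C : Set E} {x : E} (hx : x ∈ C) {r : ℝ}
    (hr : 0 < r) (w : Fin m → E) :
    Fin.cons x w ∈ univ.pi (fun _ => C) ∩ closeTuples (Fin (m + 1)) r ↔
      (fun j => r⁻¹ • (w j - x)) ∈ clusterShapeIn (Fin m) C x r := by
  have hscale (v : E) : ‖r⁻¹ • v‖ ≤ 1 ↔ ‖v‖ ≤ r := by
    rw [norm_smul, norm_inv, Real.norm_of_nonneg hr.le, inv_mul_le_iff₀ hr, mul_one]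
  simp only [closeTuples, clusterShapeIn, clusterShape, mem_inter_iff, Set.mem_pi, Set.mem_univ,
    forall_const, mem_ofPred_eq, Fin.forall_fin_succ, Fin.cons_zero, Fin.cons_succ, hx,
    hscale, ← smul_sub, sub_sub_sub_cancel_right, smul_inv_smul₀ hr.ne', add_sub_cancel,
    dist_eq_norm, sub_self, norm_zero, hr.le, true_and, norm_sub_rev x, forall_and]
  tauto

lemma eventually_clusterShapeIn_eq {C : Set E} {x : E} (hx : x ∈ interior C) :
    ∀ᶠ r in 𝓝 (0 : ℝ), clusterShapeIn ι C x r = clusterShape ι E := by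
  obtain ⟨ε, hε, hball⟩ := Metric.mem_nhds_iff.mp (mem_interior_iff_mem_nhds.mp hx)
  filter_upwards [Metric.ball_mem_nhds (0 : ℝ) hε] with r hr
  refine Set.ext fun z => and_iff_left_of_imp fun hz j => hball ?_
  rw [Metric.mem_ball, dist_self_add_left, norm_smul]
  calc ‖r‖ * ‖z j‖ ≤ ‖r‖ * 1 := by gcongr; exact hz.1 j
    _ < ε := by simpa using hr

variable [MeasurableSpace E]

lemma lintegral_pi_clusterShapeIn_le [Fintype ι] (μ : Measure E) (C : Set E)
    (r : ℝ) :
    ∫⁻ x in C, Measure.pi (fun _ : ι => μ) (clusterShapeIn ι C x r) ∂μ ≤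
      Measure.pi (fun _ => μ) (clusterShape ι E) * μ C := by
  rw [← setLIntegral_const]
  exact lintegral_mono fun x => measure_mono fun z hz => hz.1

variable [BorelSpace E] [FiniteDimensional ℝ E]

lemma measurable_measure_pi_clusterShapeIn [Fintype ι] (μ : Measure E) [SigmaFinite μ]
    {C : Set E} (hC : MeasurableSet C) (r : ℝ) :
    Measurable fun x => Measure.pi (fun _ : ι => μ) (clusterShapeIn ι C x r) := by
  have hgraph : {p : E × (ι → E) | p.2 ∈ clusterShapeIn ι C p.1 r} =
      Prod.snd ⁻¹' clusterShape ι E ∩ ⋂ j, (fun p : E × (ι → E) => p.1 + r • p.2 j) ⁻¹' C := by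
    ext p; simp [clusterShapeIn]
  have hT : MeasurableSet {p : E × (ι → E) | p.2 ∈ clusterShapeIn ι C p.1 r} := by
    rw [hgraph]
    exact (measurable_snd isClosed_clusterShape.measurableSet).inter
      (.iInter fun j => (by fun_prop : Measurable fun p : E × (ι → E) => p.1 + r • p.2 j) hC)
  exact measurable_measure_prodMk_left hT

theorem tendsto_lintegral_pi_clusterShapeIn [Fintype ι] (μ : Measure E) [SigmaFinite μ]
    [IsFiniteMeasureOnCompacts μ] {C : Set E} (hC : MeasurableSet C) (hCfin : μ C ≠ ∞)
    (hfr : μ (frontier C) = 0) :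
    Tendsto (fun r => ∫⁻ x in C, Measure.pi (fun _ : ι => μ) (clusterShapeIn ι C x r) ∂μ)
      (𝓝 0) (𝓝 (Measure.pi (fun _ => μ) (clusterShape ι E) * μ C)) := by
  have hint : ∀ᵐ x ∂μ.restrict C, x ∈ interior C := by
    rw [ae_restrict_iff' hC]
    refine measure_mono_null (fun x hx => ?_) hfr
    simp only [mem_compl_iff, mem_ofPred_eq, Classical.not_imp] at hx
    exact ⟨subset_closure hx.1, hx.2⟩
  rw [← setLIntegral_const]
  refine tendsto_lintegral_filter_of_dominated_convergence _
    (.of_forall fun r => measurable_measure_pi_clusterShapeIn μ hC r)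
    (.of_forall fun r => .of_forall fun x => measure_mono fun z hz => hz.1)
    (by rw [setLIntegral_const]
        exact ENNReal.mul_ne_top (measure_pi_clusterShape_lt_top μ).ne hCfin) ?_
  filter_upwards [hint] with x hx
  exact tendsto_const_nhds.congr'
    ((eventually_clusterShapeIn_eq (ι := ι) hx).mono fun r h => by simp only [h])

variable (μ : Measure E) [μ.IsAddHaarMeasure]

lemma pi_preimage_smul_sub_const [Fintype ι] {r : ℝ} (hr : 0 < r) (x : E)
    (Z : Set (ι → E)) :
    Measure.pi (fun _ : ι => μ) ((fun w j => r⁻¹ • (w j - x)) ⁻¹' Z) =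
      ENNReal.ofReal (r ^ (Fintype.card ι * Module.finrank ℝ E)) *
        Measure.pi (fun _ => μ) Z := by
  have hfinrank : Module.finrank ℝ (ι → E) = Fintype.card ι * Module.finrank ℝ E := by
    simp [Module.finrank_pi_fintype]
  have hmap : (fun (w : ι → E) j => r⁻¹ • (w j - x)) = (r⁻¹ • ·) ∘ (· + fun _ => -x) := by
    ext w j; simp [sub_eq_add_neg]
  rw [hmap, preimage_comp, measure_preimage_add_right,
    Measure.addHaar_preimage_smul _ (inv_ne_zero hr.ne'), hfinrank, inv_pow, inv_inv,
    abs_of_pos (by positivity)]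

/-- Fix the first point `x ∈ C` and substitute `w = x + r • z` for the others. -/
lemma pi_pi_inter_closeTuples {m : ℕ} {C : Set E} (hC : MeasurableSet C) {r : ℝ}
    (hr : 0 < r) :
    Measure.pi (fun _ : Fin (m + 1) => μ)
        (univ.pi (fun _ => C) ∩ closeTuples (Fin (m + 1)) r) =
      ENNReal.ofReal (r ^ (m * Module.finrank ℝ E)) *
        ∫⁻ x in C, Measure.pi (fun _ : Fin m => μ) (clusterShapeIn (Fin m) C x r) ∂μ := by
  rw [Measure.pi_fin_succ_apply μ
      ((MeasurableSet.univ_pi fun _ => hC).inter (isClosed_closeTuples _ r).measurableSet),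
    ← lintegral_indicator hC, ← lintegral_const_mul' _ _ ENNReal.ofReal_ne_top]
  refine lintegral_congr fun x => ?_
  by_cases hx : x ∈ C
  · simp_rw [indicator_of_mem hx, cons_mem_pi_inter_closeTuples_iff hx hr]
    rw [← preimage_ofPred_eq, pi_preimage_smul_sub_const μ hr, Fintype.card_fin, ofPred_mem_eq]
  · have hempty : {w : Fin m → E | Fin.cons x w ∈ univ.pi (fun _ => C) ∩
        closeTuples (Fin (m + 1)) r} = ∅ :=
      eq_empty_of_forall_notMem fun w hw => hx (by simpa using hw.1 0 (mem_univ 0))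
    rw [indicator_of_notMem hx, mul_zero, hempty, measure_empty]

theorem integral_card_filter_forall_mem_dist_le_of_cond {C : Set E} (hC : MeasurableSet C)
    (hC₀ : μ C ≠ 0) (hC_top : μ C ≠ ∞) {Ω : Type*} [MeasurableSpace Ω] {P : Measure Ω}
    [IsProbabilityMeasure P] [Fintype ι] {Y : ι → Ω → E} (m : ℕ) {r : ℝ}
    [∀ ω, DecidablePred fun J : Finset ι => ∀ i ∈ J, ∀ j ∈ J, dist (Y i ω) (Y j ω) ≤ r]
    (hr : 0 < r) (hY : ∀ i, Measurable (Y i)) (hind : iIndepFun Y P)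
    (hlaw : ∀ i, P.map (Y i) = μ[|C]) :
    ∫ ω, ((((Finset.univ : Finset ι).powersetCard (m + 1)).filter fun J =>
        ∀ i ∈ J, ∀ j ∈ J, dist (Y i ω) (Y j ω) ≤ r).card : ℝ) ∂P =
      (Fintype.card ι).choose (m + 1) * r ^ (m * Module.finrank ℝ E) *
        ((μ C).toReal⁻¹ ^ (m + 1) * (∫⁻ x in C,
          Measure.pi (fun _ : Fin m => μ) (clusterShapeIn (Fin m) C x r) ∂μ).toReal) := by
  rw [integral_card_filter_forall_mem_dist_le _ r hY hind hlaw,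
    pi_cond_apply μ hC₀ hC_top (isClosed_closeTuples _ r).measurableSet,
    pi_pi_inter_closeTuples μ hC hr, Fintype.card_fin]
  simp only [ENNReal.toReal_mul, ENNReal.toReal_pow, ENNReal.toReal_inv,
    ENNReal.toReal_ofReal (by positivity : 0 ≤ r ^ (m * Module.finrank ℝ E))]
  ring

end ClusterShape

section CriticalScale

variable {E : Type*} [NormedAddCommGroup E] [NormedSpace ℝ E] [MeasurableSpace E] [BorelSpace E]
  [FiniteDimensional ℝ E] (μ : Measure E) [μ.IsAddHaarMeasure] {m : ℕ} {C : Set E} {γ : ℝ}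
  {Ω : Type*} [MeasurableSpace Ω] {P : Measure Ω} [IsProbabilityMeasure P] {X : ℕ → Ω → E}

theorem integral_card_filter_forall_mem_dist_le_rpow_eq (hm : m ≠ 0)
    (hE : Module.finrank ℝ E = m + 1) (hC : MeasurableSet C) (hC₀ : μ C ≠ 0) (hC_top : μ C ≠ ∞)
    (hγ : 0 < γ) (hX : ∀ i, Measurable (X i)) (hind : iIndepFun X P)
    (hlaw : ∀ i, P.map (X i) = μ[|C]) {n : ℕ} (hn : n ≠ 0) :
    ∫ ω, ((((Finset.univ : Finset (Fin n)).powersetCard (m + 1)).filter fun J =>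
        ∀ i : Fin n, i ∈ J → ∀ j : Fin n, j ∈ J →
          dist (X i ω) (X j ω) ≤ (γ * n) ^ (-(1 / (m : ℝ)))).card : ℝ) ∂P =
      n.choose (m + 1) * (γ * n)⁻¹ ^ (m + 1) * ((μ C).toReal⁻¹ ^ (m + 1) *
        (∫⁻ x in C, Measure.pi (fun _ : Fin m => μ)
          (clusterShapeIn (Fin m) C x ((γ * n) ^ (-(1 / (m : ℝ))))) ∂μ).toReal) := by
  have hγn : 0 < γ * n := mul_pos hγ (Nat.cast_pos.mpr (Nat.pos_of_ne_zero hn))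
  have h := integral_card_filter_forall_mem_dist_le_of_cond μ hC hC₀ hC_top
    (Y := fun i : Fin n => X i) m (Real.rpow_pos_of_pos hγn (-(1 / (m : ℝ)))) (fun i => hX i)
    (hind.precomp Fin.val_injective) (fun i => hlaw i)
  rwa [Fintype.card_fin, hE, pow_mul, rpow_neg_one_div_natCast_pow hγn.le hm] at h

theorem tendsto_integral_card_filter_forall_mem_dist_le_rpow (hm : m ≠ 0)
    (hE : Module.finrank ℝ E = m + 1) (hC : MeasurableSet C) (hC₀ : μ C ≠ 0) (hC_top : μ C ≠ ∞)
    (hfr : μ (frontier C) = 0) (hγ : 0 < γ) (hX : ∀ i, Measurable (X i))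
    (hind : iIndepFun X P) (hlaw : ∀ i, P.map (X i) = μ[|C]) :
    Tendsto (fun n : ℕ => ∫ ω, ((((Finset.univ : Finset (Fin n)).powersetCard (m + 1)).filter
        fun J => ∀ i : Fin n, i ∈ J → ∀ j : Fin n, j ∈ J →
          dist (X i ω) (X j ω) ≤ (γ * n) ^ (-(1 / (m : ℝ)))).card : ℝ) ∂P) atTop
      (𝓝 (γ⁻¹ ^ (m + 1) / (m + 1).factorial * ((μ C).toReal⁻¹ ^ (m + 1) *
        (Measure.pi (fun _ : Fin m => μ) (clusterShape (Fin m) E) * μ C).toReal))) := by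
  have hr : Tendsto (fun n : ℕ => (γ * n) ^ (-(1 / (m : ℝ)))) atTop (𝓝 0) :=
    (tendsto_rpow_neg_atTop (by positivity)).comp
      (tendsto_natCast_atTop_atTop.const_mul_atTop hγ)
  have hJ := (ENNReal.tendsto_toReal
    (ENNReal.mul_ne_top (measure_pi_clusterShape_lt_top (ι := Fin m) μ).ne hC_top)).comp
    ((tendsto_lintegral_pi_clusterShapeIn μ hC hC_top hfr).comp hr)
  exact ((tendsto_choose_mul_inv_mul_pow (m + 1) γ).mul (hJ.const_mul _)).congr'
    ((eventually_ne_atTop 0).mono fun n hn =>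
      (integral_card_filter_forall_mem_dist_le_rpow_eq μ hm hE hC hC₀ hC_top hγ hX hind hlaw
        hn).symm)

theorem integral_card_filter_forall_mem_dist_le_rpow_le (hm : m ≠ 0)
    (hE : Module.finrank ℝ E = m + 1) (hC : MeasurableSet C) (hC₀ : μ C ≠ 0) (hC_top : μ C ≠ ∞)
    (hγ : 0 < γ) (hX : ∀ i, Measurable (X i)) (hind : iIndepFun X P)
    (hlaw : ∀ i, P.map (X i) = μ[|C]) (n : ℕ) :
    ∫ ω, ((((Finset.univ : Finset (Fin n)).powersetCard (m + 1)).filter fun J =>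
        ∀ i : Fin n, i ∈ J → ∀ j : Fin n, j ∈ J →
          dist (X i ω) (X j ω) ≤ (γ * n) ^ (-(1 / (m : ℝ)))).card : ℝ) ∂P ≤
      γ⁻¹ ^ (m + 1) / (m + 1).factorial * ((μ C).toReal⁻¹ ^ (m + 1) *
        (Measure.pi (fun _ : Fin m => μ) (clusterShape (Fin m) E) * μ C).toReal) := by
  rcases eq_or_ne n 0 with rfl | hn
  · rw [Finset.powersetCard_eq_empty.mpr (by simp)]
    simp only [Finset.filter_empty, Finset.card_empty, Nat.cast_zero, integral_zero]
    positivity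
  rw [integral_card_filter_forall_mem_dist_le_rpow_eq μ hm hE hC hC₀ hC_top hγ hX hind hlaw hn]
  gcongr
  · exact choose_mul_inv_mul_pow_le _ _ hγ.le
  · exact ENNReal.mul_ne_top (measure_pi_clusterShape_lt_top μ).ne hC_top
  · exact lintegral_pi_clusterShapeIn_le μ C _

end CriticalScale

/-- Asymptotics of the expected number `E N_{γn}` of `d`-element subsets of `n` i.i.d. uniform
points in a compact set `C` (of positive volume, with null boundary) whose pairwise distances
are all at most `(γn)^{−1/(d−1)}`: it converges to `c(d) γ^{−d} λ_d(C)^{−(d−1)}` with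
`c(d) = (d!)^{−1} ∫_{(B^d)^{d−1}} ∏_{i<j} 1(‖y_i−y_j‖ ≤ 1) dy ≤ (d!)^{−1} κ_d^{d−1}`,
and is bounded above by this limit for every `n`. -/
theorem stmt_18 (d : ℕ) (hd : 2 ≤ d) (C : Set (EuclideanSpace ℝ (Fin d)))
    (hC : IsCompact C) (hCvol : 0 < volume C) (hCbd : volume (frontier C) = 0)
    (γ : ℝ) (hγ : 0 < γ)
    {Ω : Type*} [MeasurableSpace Ω] (P : Measure Ω) [IsProbabilityMeasure P]
    (X : ℕ → Ω → EuclideanSpace ℝ (Fin d)) (hXm : ∀ i, Measurable (X i))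
    (hindep : iIndepFun X P)
    (hunif : ∀ i, Measure.map (X i) P = (volume C)⁻¹ • volume.restrict C) :
    ∃ c : ℝ,
      c = ((d.factorial : ℝ))⁻¹ *
          (volume {y : Fin (d - 1) → EuclideanSpace ℝ (Fin d) |
            (∀ i, ‖y i‖ ≤ 1) ∧ ∀ i j, ‖y i - y j‖ ≤ 1}).toReal ∧
      c ≤ ((d.factorial : ℝ))⁻¹ *
          (volume (Metric.ball (0 : EuclideanSpace ℝ (Fin d)) 1)).toReal ^ (d - 1) ∧
      Tendsto (fun n : ℕ =>
          ∫ ω, ((((Finset.univ : Finset (Fin n)).powersetCard d).filter fun J =>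
              ∀ i : Fin n, i ∈ J → ∀ j : Fin n, j ∈ J →
                dist (X (i : ℕ) ω) (X (j : ℕ) ω) ≤ (γ * n) ^ (-(1 / ((d : ℝ) - 1)))).card : ℝ)
            ∂P)
        atTop (nhds (c / (γ ^ d * (volume C).toReal ^ (d - 1)))) ∧
      ∀ n : ℕ,
        (∫ ω, ((((Finset.univ : Finset (Fin n)).powersetCard d).filter fun J =>
              ∀ i : Fin n, i ∈ J → ∀ j : Fin n, j ∈ J →
                dist (X (i : ℕ) ω) (X (j : ℕ) ω) ≤ (γ * n) ^ (-(1 / ((d : ℝ) - 1)))).card : ℝ)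
            ∂P)
          ≤ c / (γ ^ d * (volume C).toReal ^ (d - 1)) := by
  obtain ⟨m, rfl⟩ : ∃ m, d = m + 1 := ⟨d - 1, by omega⟩
  have hm : m ≠ 0 := by omega
  have hexp : ((m + 1 : ℕ) : ℝ) - 1 = m := by push_cast; ring
  rw [Nat.add_sub_cancel, hexp]
  have hC_top : volume C ≠ ∞ := hC.measure_lt_top.ne
  have hlimit (S : ℝ) : ((m + 1).factorial : ℝ)⁻¹ * S / (γ ^ (m + 1) * (volume C).toReal ^ m) =
      γ⁻¹ ^ (m + 1) / (m + 1).factorial * ((volume C).toReal⁻¹ ^ (m + 1) *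
        (S * (volume C).toReal)) := by
    have hV : (volume C).toReal ≠ 0 := ENNReal.toReal_ne_zero.mpr ⟨hCvol.ne', hC_top⟩
    rw [inv_pow, inv_pow, pow_succ (volume C).toReal m]
    field_simp
  refine ⟨((m + 1).factorial : ℝ)⁻¹ * (volume (clusterShape (Fin m) _)).toReal, rfl, ?_, ?_,
    fun n => ?_⟩
  · gcongr
    rw [← ENNReal.toReal_pow, ← Measure.addHaar_closedBall_eq_addHaar_ball]
    exact ENNReal.toReal_mono (ENNReal.pow_ne_top measure_closedBall_lt_top.ne)
      ((measure_pi_clusterShape_le volume).trans_eq (by rw [Fintype.card_fin]))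
  · rw [hlimit, ← ENNReal.toReal_mul]
    exact tendsto_integral_card_filter_forall_mem_dist_le_rpow volume hm finrank_euclideanSpace_fin
      hC.measurableSet hCvol.ne' hC_top hCbd hγ hXm hindep hunif
  · rw [hlimit, ← ENNReal.toReal_mul]
    exact integral_card_filter_forall_mem_dist_le_rpow_le volume hm finrank_euclideanSpace_fin
      hC.measurableSet hCvol.ne' hC_top hγ hXm hindep hunif n
end
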